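/- (Evenness of the transition coefficients) For every ρ ∈ (−1,1) and all integers n, k: μ_{nk}(ρ) = μ_{−n,−k}(ρ). -/
import Mathlib

open intervalIntegral Complex

/-- Substituting `z ↦ z⁻¹` in a circle integral over the unit circle. -/
lemma circleIntegral_comp_inv (f : ℂ → ℂ) :
    (∮ z in C(0, 1), f z) = ∮ z in C(0, 1), z ^ (-2 : ℤ) * f z⁻¹ := by
  have hper : Function.Periodic
      (fun θ : ℝ => deriv (circleMap 0 1) θ • f (circleMap 0 1 θ)) (2 * Real.pi) := by
    intro θ
    simp [deriv_circleMap, (periodic_circleMap 0 1).eq, periodic_circleMap 0 1 θ]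
  calc (∮ z in C(0, 1), f z)
      = ∫ θ in (0:ℝ)..2 * Real.pi, deriv (circleMap 0 1) θ • f (circleMap 0 1 θ) := rfl
    _ = ∫ θ in (-(2 * Real.pi) : ℝ)..0, deriv (circleMap 0 1) θ • f (circleMap 0 1 θ) := by
        have := hper.intervalIntegral_add_eq 0 (-(2 * Real.pi))
        simpa using this
    _ = ∫ θ in (0:ℝ)..2 * Real.pi, deriv (circleMap 0 1) (-θ) • f (circleMap 0 1 (-θ)) := by
        rw [intervalIntegral.integral_comp_neg
          (f := fun θ : ℝ => deriv (circleMap 0 1) θ • f (circleMap 0 1 θ))]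
        norm_num
    _ = ∫ θ in (0:ℝ)..2 * Real.pi,
          deriv (circleMap 0 1) θ • ((circleMap 0 1 θ) ^ (-2 : ℤ) * f (circleMap 0 1 θ)⁻¹) := by
        refine intervalIntegral.integral_congr fun θ _ => ?_
        have hz : Complex.exp ((θ : ℂ) * I) ≠ 0 := Complex.exp_ne_zero _
        simp only [deriv_circleMap, circleMap, ofReal_neg, zero_add, smul_eq_mul,
          neg_mul, Complex.exp_neg, zpow_neg, zpow_two, ofReal_one, one_mul]
        set w := Complex.exp ((θ : ℂ) * I) with hw
        have h : w * (w * w)⁻¹ = w⁻¹ := by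
          rw [mul_inv, ← mul_assoc, mul_inv_cancel₀ hz, one_mul]
        calc w⁻¹ * I * f w⁻¹ = (w * (w * w)⁻¹) * I * f w⁻¹ := by rw [h]
          _ = w * I * ((w * w)⁻¹ * f w⁻¹) := by ring
    _ = ∮ z in C(0, 1), z ^ (-2 : ℤ) * f z⁻¹ := rfl

/-- Circle integrals over the unit circle agree for functions agreeing away from `0`. -/
lemma circleIntegral_congr_ne_zero {f g : ℂ → ℂ} (h : ∀ z : ℂ, z ≠ 0 → f z = g z) :
    (∮ z in C(0, 1), f z) = ∮ z in C(0, 1), g z := by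
  refine intervalIntegral.integral_congr fun θ _ => ?_
  simp only [h _ (circleMap_ne_center one_ne_zero)]

/-- The transition coefficients
`μ_{nk}(ρ) = (1−ρ²)² (1/(2πi)) ∮_{|z|=1} (1+ρz)^{n−2} (z+ρ)^{−(n+2)} z^{k+1} dz`. -/
noncomputable def muCoef (ρ : ℝ) (n k : ℤ) : ℂ :=
  (1 - (ρ : ℂ) ^ 2) ^ 2 * (1 / (2 * Real.pi * Complex.I)) *
    ∮ z in C(0, 1), (1 + (ρ : ℂ) * z) ^ (n - 2) * (z + (ρ : ℂ)) ^ (-(n + 2)) * z ^ (k + 1)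

/-- Evenness of the transition coefficients: `μ_{nk}(ρ) = μ_{−n,−k}(ρ)`. -/
theorem muCoef_even (ρ : ℝ) (hρ : ρ ∈ Set.Ioo (-1 : ℝ) 1) (n k : ℤ) :
    muCoef ρ n k = muCoef ρ (-n) (-k) := by
  unfold muCoef
  congr 1
  rw [circleIntegral_comp_inv
    (fun z => (1 + (ρ : ℂ) * z) ^ (n - 2) * (z + (ρ : ℂ)) ^ (-(n + 2)) * z ^ (k + 1))]
  refine circleIntegral_congr_ne_zero fun z hz => ?_
  have e1 : (1 + (ρ : ℂ) * z⁻¹) = (z + ρ) * z⁻¹ := by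
    rw [add_mul, mul_inv_cancel₀ hz]
  have e2 : (z⁻¹ + (ρ : ℂ)) = (1 + ρ * z) * z⁻¹ := by
    rw [add_mul, one_mul, mul_assoc, mul_inv_cancel₀ hz, mul_one]
  rw [e1, e2]
  simp only [mul_zpow, inv_zpow, ← zpow_neg]
  rw [show (-n - 2 : ℤ) = -(n + 2) from by ring,
    show (-(-n + 2) : ℤ) = n - 2 from by ring,
    show (-k + 1 : ℤ) = -2 + (-(n - 2) + ((n + 2) + -(k + 1))) from by ring,
    zpow_add₀ hz, zpow_add₀ hz, zpow_add₀ hz]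
  ring_nf
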